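/- arXiv:2112.13739 — 6 statements merged into one kernel-verified Lean document; each statement's English description precedes it below -/
import Mathlib

section
/- Let R be a Rota-Baxter operator of weight λ on a Hom-associative superalgebra (A, μ, α). Then the bilinear product μ_R(x,y) = μ(R(x), y) + μ(x, R(y)) + λμ(x,y) defines a Hom-associative superalgebra structure (A, μ_R, α); that is, μ_R is even bilinear and μ_R(μ_R(x,y), α(z)) = μ_R(α(x), μ_R(y,z)) for all homogeneous x, y, z. -/
/-- The sign `(-1)^g` for a parity `g : ZMod 2`, as an element of the field `𝕂`. -/
def eps (𝕂 : Type*) [Field 𝕂] (g : ZMod 2) : 𝕂 := (-1 : 𝕂) ^ g.val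

section Binary

variable (𝕂 : Type*) [Field 𝕂]
variable {A : Type*} [AddCommGroup A] [Module 𝕂 A]

/-- Bilinearity of a plain binary product. -/
structure IsBilin (μ : A → A → A) : Prop where
  add_left : ∀ x y z : A, μ (x + y) z = μ x z + μ y z
  add_right : ∀ x y z : A, μ x (y + z) = μ x y + μ x z
  smul_left : ∀ (c : 𝕂) (x y : A), μ (c • x) y = c • μ x y
  smul_right : ∀ (c : 𝕂) (x y : A), μ x (c • y) = c • μ x y

variable (gr : ZMod 2 → Submodule 𝕂 A)

/-- A binary product is even w.r.t. the grading `gr`. -/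
def EvenBilin (μ : A → A → A) : Prop :=
  ∀ (p q : ZMod 2) (x y : A), x ∈ gr p → y ∈ gr q → μ x y ∈ gr (p + q)

/-- A linear map is even w.r.t. the grading `gr`. -/
def EvenLinMap {B : Type*} [AddCommGroup B] [Module 𝕂 B]
    (grB : ZMod 2 → Submodule 𝕂 B) (α : B →ₗ[𝕂] B) : Prop :=
  ∀ (p : ZMod 2) (x : B), x ∈ grB p → α x ∈ grB p

/-- Hom-associative superalgebra structure. -/
structure IsHomAssocSuper (μ : A → A → A) (α : A →ₗ[𝕂] A) : Prop where
  bilin : IsBilin 𝕂 μ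
  even_mul : EvenBilin 𝕂 gr μ
  even_alpha : EvenLinMap 𝕂 gr α
  assoc : ∀ (p q r : ZMod 2) (x y z : A), x ∈ gr p → y ∈ gr q → z ∈ gr r →
    μ (μ x y) (α z) = μ (α x) (μ y z)

/-- Supercommutativity of a binary product. -/
def SuperComm (μ : A → A → A) : Prop :=
  ∀ (p q : ZMod 2) (x y : A), x ∈ gr p → y ∈ gr q → μ x y = eps 𝕂 (p * q) • μ y x

/-- Hom-Lie superalgebra structure. -/
structure IsHomLieSuper (b : A → A → A) (α : A →ₗ[𝕂] A) : Prop where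
  bilin : IsBilin 𝕂 b
  even_bracket : EvenBilin 𝕂 gr b
  even_alpha : EvenLinMap 𝕂 gr α
  skew : ∀ (p q : ZMod 2) (x y : A), x ∈ gr p → y ∈ gr q →
    b x y = - (eps 𝕂 (p * q)) • b y x
  jacobi : ∀ (p q r : ZMod 2) (x y z : A), x ∈ gr p → y ∈ gr q → z ∈ gr r →
    b (α x) (b y z) = b (b x y) (α z) + eps 𝕂 (p * q) • b (α y) (b x z)

/-- The Hom-Leibniz identity relating a bracket and a product. -/
def HomLeibniz (b μ : A → A → A) (α : A →ₗ[𝕂] A) : Prop :=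
  ∀ (p q r : ZMod 2) (x y z : A), x ∈ gr p → y ∈ gr q → z ∈ gr r →
    b (α x) (μ y z) = μ (b x y) (α z) + eps 𝕂 (p * q) • μ (α y) (b x z)

/-- Non-commutative Hom-Poisson superalgebra structure. -/
structure IsNCHomPoissonSuper (b μ : A → A → A) (α : A →ₗ[𝕂] A) : Prop where
  lie : IsHomLieSuper 𝕂 gr b α
  assoc : IsHomAssocSuper 𝕂 gr μ α
  leibniz : HomLeibniz 𝕂 gr b μ α

/-- Hom-Poisson superalgebra structure (with supercommutative product). -/
structure IsHomPoissonSuper (b μ : A → A → A) (α : A →ₗ[𝕂] A) : Prop where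
  lie : IsHomLieSuper 𝕂 gr b α
  assoc : IsHomAssocSuper 𝕂 gr μ α
  comm : SuperComm 𝕂 gr μ
  leibniz : HomLeibniz 𝕂 gr b μ α

end Binary

section Rep

variable (𝕂 : Type*) [Field 𝕂]
variable {A : Type*} [AddCommGroup A] [Module 𝕂 A]
variable {V : Type*} [AddCommGroup V] [Module 𝕂 V]
variable (gr : ZMod 2 → Submodule 𝕂 A) (grV : ZMod 2 → Submodule 𝕂 V)

/-- A linear map `A → End V` is even w.r.t. the gradings. -/
def EvenEndMap (η : A →ₗ[𝕂] Module.End 𝕂 V) : Prop :=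
  ∀ (p q : ZMod 2) (x : A) (v : V), x ∈ gr p → v ∈ grV q → η x v ∈ grV (p + q)

/-- Representation of a supercommutative Hom-associative superalgebra. -/
def AssocRep (μ : A → A → A) (α : A →ₗ[𝕂] A)
    (η : A →ₗ[𝕂] Module.End 𝕂 V) (αV : V →ₗ[𝕂] V) : Prop :=
  ∀ (p q : ZMod 2) (x y : A), x ∈ gr p → y ∈ gr q →
    (η (μ x y)).comp αV = (η (α x)).comp (η y) ∧
    (η (α x)).comp (η y) = eps 𝕂 (p * q) • ((η (α y)).comp (η x))

/-- Representation of a Hom-Lie superalgebra. -/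
def LieRep (b : A → A → A) (α : A →ₗ[𝕂] A)
    (ρ : A →ₗ[𝕂] Module.End 𝕂 V) (αV : V →ₗ[𝕂] V) : Prop :=
  ∀ (p q : ZMod 2) (x y : A), x ∈ gr p → y ∈ gr q →
    (ρ (b x y)).comp αV = (ρ (α x)).comp (ρ y) - eps 𝕂 (p * q) • ((ρ (α y)).comp (ρ x))

/-- Representation of a Hom-Poisson superalgebra. -/
structure PoissonRep (b μ : A → A → A) (α : A →ₗ[𝕂] A)
    (ρ η : A →ₗ[𝕂] Module.End 𝕂 V) (αV : V →ₗ[𝕂] V) : Prop where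
  assoc_rep : AssocRep 𝕂 gr μ α η αV
  lie_rep : LieRep 𝕂 gr b α ρ αV
  compat₁ : ∀ (p q : ZMod 2) (x y : A), x ∈ gr p → y ∈ gr q →
    (η (b x y)).comp αV = (ρ (α x)).comp (η y) - eps 𝕂 (p * q) • ((η (α y)).comp (ρ x))
  compat₂ : ∀ (p q : ZMod 2) (x y : A), x ∈ gr p → y ∈ gr q →
    (ρ (μ x y)).comp αV = (η (α x)).comp (ρ y) + eps 𝕂 (p * q) • ((η (α y)).comp (ρ x))

end Rep

/-- If `R` is a Rota-Baxter operator of weight `λ` on a Hom-associative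
superalgebra `(A, μ, α)`, then `μ_R(x,y) = μ(Rx,y) + μ(x,Ry) + λ μ(x,y)` defines a
Hom-associative superalgebra `(A, μ_R, α)`. -/
theorem statement3 {𝕂 : Type*} [Field 𝕂] [CharZero 𝕂]
    {A : Type*} [AddCommGroup A] [Module 𝕂 A]
    (gr : ZMod 2 → Submodule 𝕂 A) (hgr : DirectSum.IsInternal gr)
    (μ : A → A → A) (α : A →ₗ[𝕂] A)
    (hA : IsHomAssocSuper 𝕂 gr μ α) (l : 𝕂)
    (R : A →ₗ[𝕂] A) (hRe : EvenLinMap 𝕂 gr R)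
    (hRα : ∀ x : A, R (α x) = α (R x))
    (hRB : ∀ (p q : ZMod 2) (x y : A), x ∈ gr p → y ∈ gr q →
      μ (R x) (R y) = R (μ (R x) y + μ x (R y) + l • μ x y)) :
    IsHomAssocSuper 𝕂 gr (fun x y => μ (R x) y + μ x (R y) + l • μ x y) α := by
  obtain ⟨hb, hev, hαe, hassoc⟩ := hA
  constructor
  · constructor
    · intro x y z
      simp only [map_add, hb.add_left, hb.add_right, smul_add]
      abel
    · intro x y z
      simp only [map_add, hb.add_left, hb.add_right, smul_add]
      abel
    · intro c x y
      simp only [map_smul, hb.smul_left, hb.smul_right, smul_add, smul_comm c l]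
    · intro c x y
      simp only [map_smul, hb.smul_left, hb.smul_right, smul_add, smul_comm c l]
  · intro p q x y hx hy
    exact Submodule.add_mem _
      (Submodule.add_mem _ (hev p q _ _ (hRe p x hx) hy) (hev p q _ _ hx (hRe q y hy)))
      (Submodule.smul_mem _ _ (hev p q _ _ hx hy))
  · exact hαe
  · intro p q r x y z hx hy hz
    have hRx : R x ∈ gr p := hRe p x hx
    have hRy : R y ∈ gr q := hRe q y hy
    have hRz : R z ∈ gr r := hRe r z hz
    have hRW : R (μ (R x) y + μ x (R y) + l • μ x y) = μ (R x) (R y) :=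
      (hRB p q x y hx hy).symm
    have hRU : R (μ (R y) z + μ y (R z) + l • μ y z) = μ (R y) (R z) :=
      (hRB q r y z hy hz).symm
    have h1 : μ (μ (R x) (R y)) (α z) = μ (α (R x)) (μ (R y) z) :=
      hassoc p q r _ _ _ hRx hRy hz
    have h2 : μ (μ (R x) y) (α (R z)) = μ (α (R x)) (μ y (R z)) :=
      hassoc p q r _ _ _ hRx hy hRz
    have h3 : μ (μ x (R y)) (α (R z)) = μ (α x) (μ (R y) (R z)) :=
      hassoc p q r _ _ _ hx hRy hRz
    have h4 : μ (μ x y) (α (R z)) = μ (α x) (μ y (R z)) :=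
      hassoc p q r _ _ _ hx hy hRz
    have h5 : μ (μ (R x) y) (α z) = μ (α (R x)) (μ y z) :=
      hassoc p q r _ _ _ hRx hy hz
    have h6 : μ (μ x (R y)) (α z) = μ (α x) (μ (R y) z) :=
      hassoc p q r _ _ _ hx hRy hz
    have h7 : μ (μ x y) (α z) = μ (α x) (μ y z) :=
      hassoc p q r _ _ _ hx hy hz
    simp only [hRW, hRU, hRα, hb.add_left, hb.add_right, hb.smul_left, hb.smul_right,
      smul_add, h1, h2, h3, h4, h5, h6, h7]
    module
end

section
/- Let (A, [·,·], α) be a Hom-Lie superalgebra and R : A → A a Rota-Baxter operator of weight λ on A. Then (A, [·,·]_R, α) is a Hom-Lie superalgebra, where [x,y]_R = [R(x), y] + [x, R(y)] + λ[x,y] for all homogeneous x, y; that is, [·,·]_R is even bilinear, super-skew-symmetric and satisfies the Hom super-Jacobi identity [α(x),[y,z]_R]_R = [[x,y]_R, α(z)]_R + (−1)^{|x||y|}[α(y),[x,z]_R]_R. -/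
/-- If `R` is a Rota-Baxter operator of weight `λ` on a Hom-Lie superalgebra
`(A, [·,·], α)`, then `[x,y]_R = [Rx,y] + [x,Ry] + λ[x,y]` defines a Hom-Lie superalgebra
`(A, [·,·]_R, α)`. -/
theorem statement4 {𝕂 : Type*} [Field 𝕂] [CharZero 𝕂]
    {A : Type*} [AddCommGroup A] [Module 𝕂 A]
    (gr : ZMod 2 → Submodule 𝕂 A) (hgr : DirectSum.IsInternal gr)
    (b : A → A → A) (α : A →ₗ[𝕂] A)
    (hL : IsHomLieSuper 𝕂 gr b α) (l : 𝕂)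
    (R : A →ₗ[𝕂] A) (hRe : EvenLinMap 𝕂 gr R)
    (hRα : ∀ x : A, R (α x) = α (R x))
    (hRB : ∀ (p q : ZMod 2) (x y : A), x ∈ gr p → y ∈ gr q →
      b (R x) (R y) = R (b (R x) y + b x (R y) + l • b x y)) :
    IsHomLieSuper 𝕂 gr (fun x y => b (R x) y + b x (R y) + l • b x y) α := by
  obtain ⟨hbil, heb, hea, hskew, hjac⟩ := hL
  constructor
  · constructor
    · intro x y z
      simp only [map_add, hbil.add_left, hbil.add_right, smul_add]
      abel
    · intro x y z
      simp only [map_add, hbil.add_left, hbil.add_right, smul_add]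
      abel
    · intro c x y
      simp only [map_smul, hbil.smul_left, smul_add, smul_comm l c]
    · intro c x y
      simp only [map_smul, hbil.smul_right, smul_add, smul_comm l c]
  · intro p q x y hx hy
    exact Submodule.add_mem _ (Submodule.add_mem _ (heb p q _ _ (hRe p x hx) hy)
      (heb p q _ _ hx (hRe q y hy))) (Submodule.smul_mem _ _ (heb p q _ _ hx hy))
  · exact hea
  · intro p q x y hx hy
    have h1 := hskew p q (R x) y (hRe p x hx) hy
    have h2 := hskew p q x (R y) hx (hRe q y hy)
    have h3 := hskew p q x y hx hy
    rw [h1, h2, h3]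
    module
  · intro p q r x y z hx hy hz
    have hRx := hRe p x hx
    have hRy := hRe q y hy
    have hRz := hRe r z hz
    have hyz := hRB q r y z hy hz
    have hxy := hRB p q x y hx hy
    have hxz := hRB p r x z hx hz
    have J1 := hjac p q r (R x) (R y) z hRx hRy hz
    have J2 := hjac p q r (R x) y (R z) hRx hy hRz
    have J3 := hjac p q r (R x) y z hRx hy hz
    have J4 := hjac p q r x (R y) (R z) hx hRy hRz
    have J5 := hjac p q r x (R y) z hx hRy hz
    have J6 := hjac p q r x y (R z) hx hy hRz
    have J7 := hjac p q r x y z hx hy hz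
    rw [← hyz, ← hxy, ← hxz]
    simp only [hRα, hbil.add_left, hbil.add_right, hbil.smul_left, hbil.smul_right,
      map_add, map_smul, smul_add]
    rw [J1, J2, J3, J4, J5, J6, J7]
    module
end

section
/- Let (A, [·,·], μ, α) be a Hom-Poisson superalgebra and let R : A → A be an even linear map commuting with α which is simultaneously a Rota-Baxter operator of weight λ on the Hom-associative superalgebra (A, μ, α) and a Rota-Baxter operator of weight λ on the Hom-Lie superalgebra (A, [·,·], α). Define μ_R(x,y) = μ(R(x), y) + μ(x, R(y)) + λμ(x,y) and [x,y]_R = [R(x), y] + [x, R(y)] + λ[x,y]. Then (A, [·,·]_R, μ_R, α) is a Hom-Poisson superalgebra; in particular the Hom-Leibniz identity [α(x), μ_R(y,z)]_R = μ_R([x,y]_R, α(z)) + (−1)^{|x||y|} μ_R(α(y), [x,z]_R) holds for all homogeneous x, y, z. -/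
section Aux

variable {𝕂 : Type*} [Field 𝕂]
variable {A : Type*} [AddCommGroup A] [Module 𝕂 A]

lemma bilin_deform {b : A → A → A} (hb : IsBilin 𝕂 b) (R : A →ₗ[𝕂] A) (l : 𝕂) :
    IsBilin 𝕂 (fun x y => b (R x) y + b x (R y) + l • b x y) := by
  constructor
  · intro x y z
    simp only [map_add, hb.add_left, smul_add]; abel
  · intro x y z
    simp only [map_add, hb.add_right, smul_add]; abel
  · intro c x y
    simp only [map_smul, hb.smul_left, smul_add, smul_comm l c]
  · intro c x y
    simp only [map_smul, hb.smul_right, smul_add, smul_comm l c]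

lemma even_deform {gr : ZMod 2 → Submodule 𝕂 A} {b : A → A → A}
    (hb : EvenBilin 𝕂 gr b) {R : A →ₗ[𝕂] A} (hR : EvenLinMap 𝕂 gr R) (l : 𝕂) :
    EvenBilin 𝕂 gr (fun x y => b (R x) y + b x (R y) + l • b x y) := by
  intro p q x y hx hy
  exact Submodule.add_mem _
    (Submodule.add_mem _ (hb p q _ _ (hR p x hx) hy) (hb p q _ _ hx (hR q y hy)))
    (Submodule.smul_mem _ _ (hb p q _ _ hx hy))

end Aux


/-- If `(R, R)` is a Rota-Baxter operator of weight `(λ, λ)` on a Hom-Poisson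
superalgebra `(A, [·,·], μ, α)`, then `(A, [·,·]_R, μ_R, α)` is a Hom-Poisson superalgebra. -/
theorem statement5 {𝕂 : Type*} [Field 𝕂] [CharZero 𝕂]
    {A : Type*} [AddCommGroup A] [Module 𝕂 A]
    (gr : ZMod 2 → Submodule 𝕂 A) (hgr : DirectSum.IsInternal gr)
    (b μ : A → A → A) (α : A →ₗ[𝕂] A)
    (hP : IsHomPoissonSuper 𝕂 gr b μ α) (l : 𝕂)
    (R : A →ₗ[𝕂] A) (hRe : EvenLinMap 𝕂 gr R)
    (hRα : ∀ x : A, R (α x) = α (R x))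
    (hRBassoc : ∀ (p q : ZMod 2) (x y : A), x ∈ gr p → y ∈ gr q →
      μ (R x) (R y) = R (μ (R x) y + μ x (R y) + l • μ x y))
    (hRBlie : ∀ (p q : ZMod 2) (x y : A), x ∈ gr p → y ∈ gr q →
      b (R x) (R y) = R (b (R x) y + b x (R y) + l • b x y)) :
    IsHomPoissonSuper 𝕂 gr
      (fun x y => b (R x) y + b x (R y) + l • b x y)
      (fun x y => μ (R x) y + μ x (R y) + l • μ x y) α  := by
  obtain ⟨hLie, hAssoc, hComm, hLeib⟩ := hP
  have hbB := hLie.bilin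
  have hmB := hAssoc.bilin
  refine ⟨⟨bilin_deform hbB R l, even_deform hLie.even_bracket hRe l, hLie.even_alpha,
      ?_, ?_⟩,
    ⟨bilin_deform hmB R l, even_deform hAssoc.even_mul hRe l, hAssoc.even_alpha, ?_⟩,
    ?_, ?_⟩
  · -- skew symmetry
    intro p q x y hx hy
    beta_reduce
    rw [hLie.skew p q (R x) y (hRe p x hx) hy, hLie.skew p q x (R y) hx (hRe q y hy),
      hLie.skew p q x y hx hy]
    module
  · -- Jacobi
    intro p q r x y z hx hy hz
    have hRx := hRe p x hx; have hRy := hRe q y hy; have hRz := hRe r z hz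
    beta_reduce
    rw [← hRBlie q r y z hy hz, ← hRBlie p q x y hx hy, ← hRBlie p r x z hx hz,
      hRα x, hRα y, hRα z]
    simp only [hbB.add_left, hbB.add_right, hbB.smul_left, hbB.smul_right, smul_add]
    rw [hLie.jacobi p q r (R x) (R y) z hRx hRy hz,
      hLie.jacobi p q r (R x) y (R z) hRx hy hRz,
      hLie.jacobi p q r (R x) y z hRx hy hz,
      hLie.jacobi p q r x (R y) (R z) hx hRy hRz,
      hLie.jacobi p q r x (R y) z hx hRy hz,
      hLie.jacobi p q r x y (R z) hx hy hRz,
      hLie.jacobi p q r x y z hx hy hz]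
    simp only [smul_add]
    module
  · -- associativity
    intro p q r x y z hx hy hz
    have hRx := hRe p x hx; have hRy := hRe q y hy; have hRz := hRe r z hz
    beta_reduce
    rw [← hRBassoc q r y z hy hz, ← hRBassoc p q x y hx hy, hRα x, hRα z]
    simp only [hmB.add_left, hmB.add_right, hmB.smul_left, hmB.smul_right, smul_add]
    rw [hAssoc.assoc p q r (R x) (R y) z hRx hRy hz,
      hAssoc.assoc p q r (R x) y (R z) hRx hy hRz,
      hAssoc.assoc p q r (R x) y z hRx hy hz,
      hAssoc.assoc p q r x (R y) (R z) hx hRy hRz,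
      hAssoc.assoc p q r x (R y) z hx hRy hz,
      hAssoc.assoc p q r x y (R z) hx hy hRz,
      hAssoc.assoc p q r x y z hx hy hz]
    module
  · -- supercommutativity
    intro p q x y hx hy
    beta_reduce
    rw [hComm p q (R x) y (hRe p x hx) hy, hComm p q x (R y) hx (hRe q y hy),
      hComm p q x y hx hy]
    module
  · -- Hom-Leibniz
    intro p q r x y z hx hy hz
    have hRx := hRe p x hx; have hRy := hRe q y hy; have hRz := hRe r z hz
    beta_reduce
    rw [← hRBassoc q r y z hy hz, ← hRBlie p q x y hx hy, ← hRBlie p r x z hx hz,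
      hRα x, hRα y, hRα z]
    simp only [hbB.add_left, hbB.add_right, hbB.smul_left, hbB.smul_right,
      hmB.add_left, hmB.add_right, hmB.smul_left, hmB.smul_right, smul_add]
    rw [hLeib p q r (R x) (R y) z hRx hRy hz,
      hLeib p q r (R x) y (R z) hRx hy hRz,
      hLeib p q r (R x) y z hRx hy hz,
      hLeib p q r x (R y) (R z) hx hRy hRz,
      hLeib p q r x (R y) z hx hRy hz,
      hLeib p q r x y (R z) hx hy hRz,
      hLeib p q r x y z hx hy hz]
    simp only [smul_add]
    module
end

section
/- Let (A, μ, α) be a supercommutative Hom-associative superalgebra, V a superspace, η : A → End(V) an even linear map and α_V : V → V an even linear map. Equip the superspace A ⊕ V (with grading (A ⊕ V)_k = A_k ⊕ V_k) with the product μ_{A⊕V}(x+u, y+v) = μ(x,y) + η(x)v + (−1)^{|y||u|} η(y)u and the map (α+α_V)(x+u) = α(x) + α_V(u), for homogeneous x, y ∈ A and u, v ∈ V. Then (V, η, α_V) is a representation of (A, μ, α) if and only if (A ⊕ V, μ_{A⊕V}, α+α_V) is a supercommutative Hom-associative superalgebra. -/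
lemma eps_add' (𝕂 : Type*) [Field 𝕂] (g h : ZMod 2) : eps 𝕂 (g + h) = eps 𝕂 g * eps 𝕂 h := by
  fin_cases g <;> fin_cases h <;>
    simp [eps, ZMod.val, ZMod]

lemma eps_mul_self' (𝕂 : Type*) [Field 𝕂] (g : ZMod 2) : eps 𝕂 g * eps 𝕂 g = 1 := by
  fin_cases g <;>
    simp [eps, ZMod.val, ZMod]

lemma eps_mul_eq' (𝕂 : Type*) [Field 𝕂] {a b c : ZMod 2} (h : a + b = c) :
    eps 𝕂 a * eps 𝕂 b = eps 𝕂 c := by rw [← eps_add', h]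

lemma ext_internal' {𝕂 V : Type*} [Field 𝕂] [AddCommGroup V] [Module 𝕂 V]
    {grV : ZMod 2 → Submodule 𝕂 V} (h : DirectSum.IsInternal grV) {f g : V →ₗ[𝕂] V}
    (hfg : ∀ (r : ZMod 2) (v : V), v ∈ grV r → f v = g v) : f = g := by
  ext v
  have hv : v ∈ (⊤ : Submodule 𝕂 V) := trivial
  rw [← h.submodule_iSup_eq_top] at hv
  refine Submodule.iSup_induction (motive := fun v => f v = g v) grV hv hfg (by simp) ?_
  intro a b ha hb
  simp [map_add, ha, hb]

lemma IsBilin.zero_left' {𝕂 A : Type*} [Field 𝕂] [AddCommGroup A] [Module 𝕂 A]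
    {μ : A → A → A} (h : IsBilin 𝕂 μ) (y : A) : μ 0 y = 0 := by
  simpa using h.smul_left 0 0 y

lemma IsBilin.zero_right' {𝕂 A : Type*} [Field 𝕂] [AddCommGroup A] [Module 𝕂 A]
    {μ : A → A → A} (h : IsBilin 𝕂 μ) (x : A) : μ x 0 = 0 := by
  simpa using h.smul_right 0 x 0

/-- `(V, η, α_V)` is a representation of a supercommutative Hom-associative
superalgebra `(A, μ, α)` iff the semidirect product `A ⊕ V` is a supercommutative
Hom-associative superalgebra. -/
theorem statement6 {𝕂 : Type*} [Field 𝕂] [CharZero 𝕂]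
    {A : Type*} [AddCommGroup A] [Module 𝕂 A]
    {V : Type*} [AddCommGroup V] [Module 𝕂 V]
    (gr : ZMod 2 → Submodule 𝕂 A) (grV : ZMod 2 → Submodule 𝕂 V)
    (hgr : DirectSum.IsInternal gr) (hgrV : DirectSum.IsInternal grV)
    (μ : A → A → A) (α : A →ₗ[𝕂] A)
    (hA : IsHomAssocSuper 𝕂 gr μ α) (hcomm : SuperComm 𝕂 gr μ)
    (η : A →ₗ[𝕂] Module.End 𝕂 V) (hη : EvenEndMap 𝕂 gr grV η)
    (αV : V →ₗ[𝕂] V) (hαV : EvenLinMap 𝕂 grV αV)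
    (μAV : A × V → A × V → A × V) (hbil : IsBilin 𝕂 μAV)
    (hdef : ∀ (p q : ZMod 2) (x y : A) (u v : V),
      x ∈ gr p → y ∈ gr q → u ∈ grV p → v ∈ grV q →
      μAV (x, u) (y, v) = (μ x y, η x v + eps 𝕂 (q * p) • η y u)) :
    AssocRep 𝕂 gr μ α η αV ↔
      (IsHomAssocSuper 𝕂 (fun k => (gr k).prod (grV k)) μAV (α.prodMap αV) ∧
        SuperComm 𝕂 (fun k => (gr k).prod (grV k)) μAV) := by

  have hq1 : ∀ a b c : ZMod 2, a * (b + c) + a * b = a * c := by decide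
  have hq3 : ∀ p q r : ZMod 2, r * (p + q) + (q * p + r * q) = (q + r) * p := by decide
  have hq4 : ∀ a b c : ZMod 2, a * (b + c) + a * c = a * b := by decide
  constructor
  · intro hrep
    have R1 : ∀ (p q : ZMod 2) (x y : A), x ∈ gr p → y ∈ gr q → ∀ w : V,
        η (μ x y) (αV w) = η (α x) (η y w) := by
      intro p q x y hx hy w
      simpa using LinearMap.congr_fun (hrep p q x y hx hy).1 w
    have R2 : ∀ (p q : ZMod 2) (x y : A), x ∈ gr p → y ∈ gr q → ∀ w : V,
        η (α x) (η y w) = eps 𝕂 (p * q) • η (α y) (η x w) := by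
      intro p q x y hx hy w
      simpa using LinearMap.congr_fun (hrep p q x y hx hy).2 w
    refine ⟨⟨hbil, ?_, ?_, ?_⟩, ?_⟩
    · rintro p q ⟨x, u⟩ ⟨y, v⟩ ⟨hx, hu⟩ ⟨hy, hv⟩
      rw [hdef p q x y u v hx hy hu hv]
      refine ⟨hA.even_mul p q x y hx hy, ?_⟩
      refine Submodule.add_mem _ (hη p q x v hx hv) (Submodule.smul_mem _ _ ?_)
      have := hη q p y u hy hu
      rwa [add_comm q p] at this
    · rintro p ⟨x, u⟩ ⟨hx, hu⟩
      exact ⟨hA.even_alpha p x hx, hαV p u hu⟩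
    · rintro p q r ⟨x, u⟩ ⟨y, v⟩ ⟨z, w⟩ ⟨hx, hu⟩ ⟨hy, hv⟩ ⟨hz, hw⟩
      have hm1 : η x v + eps 𝕂 (q * p) • η y u ∈ grV (p + q) := by
        refine Submodule.add_mem _ (hη p q x v hx hv) (Submodule.smul_mem _ _ ?_)
        have := hη q p y u hy hu
        rwa [add_comm q p] at this
      have hm2 : η y w + eps 𝕂 (r * q) • η z v ∈ grV (q + r) := by
        refine Submodule.add_mem _ (hη q r y w hy hw) (Submodule.smul_mem _ _ ?_)
        have := hη r q z v hz hv
        rwa [add_comm r q] at this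
      rw [hdef p q x y u v hx hy hu hv, hdef q r y z v w hy hz hv hw,
        LinearMap.prodMap_apply, LinearMap.prodMap_apply,
        hdef (p + q) r (μ x y) (α z) _ (αV w) (hA.even_mul p q x y hx hy)
          (hA.even_alpha r z hz) hm1 (hαV r w hw),
        hdef p (q + r) (α x) (μ y z) (αV u) _ (hA.even_alpha p x hx)
          (hA.even_mul q r y z hy hz) (hαV p u hu) hm2]
      refine Prod.ext (hA.assoc p q r x y z hx hy hz) ?_
      simp only [map_add, map_smul]
      rw [R1 p q x y hx hy w, R1 q r y z hy hz u, R2 r p z x hz hx v, R2 r q z y hz hy u]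
      simp only [smul_add, smul_smul]
      have e2 : eps 𝕂 (r * (p + q)) * eps 𝕂 (r * p) = eps 𝕂 (r * q) := eps_mul_eq' 𝕂 (hq1 r p q)
      have e3 : eps 𝕂 (r * (p + q)) * (eps 𝕂 (q * p) * eps 𝕂 (r * q)) = eps 𝕂 ((q + r) * p) := by
        rw [← eps_add' 𝕂 (q * p) (r * q), ← eps_add', hq3]
      rw [e2, e3]
      abel
    · rintro p q ⟨x, u⟩ ⟨y, v⟩ ⟨hx, hu⟩ ⟨hy, hv⟩
      rw [hdef p q x y u v hx hy hu hv, hdef q p y x v u hy hx hv hu, Prod.smul_mk]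
      refine Prod.ext (hcomm p q x y hx hy) ?_
      rw [smul_add, smul_smul, eps_mul_self' 𝕂, one_smul, mul_comm q p]
      abel
  · rintro ⟨hprod, -⟩
    intro p q x y hx hy
    have key1 : ∀ (r : ZMod 2) (v : V), v ∈ grV r →
        η (μ x y) (αV v) = η (α x) (η y v) := by
      intro r v hv
      have h := hprod.assoc p q r (x, 0) (y, 0) (0, v)
        ⟨hx, Submodule.zero_mem _⟩ ⟨hy, Submodule.zero_mem _⟩ ⟨Submodule.zero_mem _, hv⟩
      rw [hdef p q x y 0 0 hx hy (Submodule.zero_mem _) (Submodule.zero_mem _),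
        hdef q r y 0 0 v hy (Submodule.zero_mem _) (Submodule.zero_mem _) hv,
        LinearMap.prodMap_apply, LinearMap.prodMap_apply] at h
      simp only [map_zero, LinearMap.zero_apply, smul_zero, add_zero, zero_add,
        hA.bilin.zero_right', hA.bilin.zero_left'] at h
      rw [hdef (p + q) r (μ x y) 0 0 (αV v) (hA.even_mul p q x y hx hy)
          (Submodule.zero_mem _) (Submodule.zero_mem _) (hαV r v hv),
        hdef p (q + r) (α x) 0 0 (η y v) (hA.even_alpha p x hx)
          (Submodule.zero_mem _) (Submodule.zero_mem _) (hη q r y v hy hv)] at h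
      simpa [hA.bilin.zero_right', hA.bilin.zero_left', map_zero] using congrArg Prod.snd h
    have key2 : ∀ (r : ZMod 2) (v : V), v ∈ grV r →
        η (α x) (η y v) = eps 𝕂 (p * q) • η (α y) (η x v) := by
      intro r v hv
      have h := hprod.assoc q r p (y, 0) (0, v) (x, 0)
        ⟨hy, Submodule.zero_mem _⟩ ⟨Submodule.zero_mem _, hv⟩ ⟨hx, Submodule.zero_mem _⟩
      rw [hdef q r y 0 0 v hy (Submodule.zero_mem _) (Submodule.zero_mem _) hv,
        hdef r p 0 x v 0 (Submodule.zero_mem _) hx hv (Submodule.zero_mem _),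
        LinearMap.prodMap_apply, LinearMap.prodMap_apply] at h
      simp only [map_zero, LinearMap.zero_apply, smul_zero, add_zero, zero_add,
        hA.bilin.zero_right', hA.bilin.zero_left'] at h
      have hmem : eps 𝕂 (p * r) • η x v ∈ grV (r + p) := by
        have := Submodule.smul_mem _ (eps 𝕂 (p * r)) (hη p r x v hx hv)
        rwa [add_comm p r] at this
      rw [hdef (q + r) p 0 (α x) (η y v) 0 (Submodule.zero_mem _) (hA.even_alpha p x hx)
          (hη q r y v hy hv) (Submodule.zero_mem _),
        hdef q (r + p) (α y) 0 0 (eps 𝕂 (p * r) • η x v) (hA.even_alpha q y hy)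
          (Submodule.zero_mem _) (Submodule.zero_mem _) hmem] at h
      have h2 := congrArg Prod.snd h
      simp only [map_zero, LinearMap.zero_apply, smul_zero, add_zero, zero_add,
        map_smul] at h2
      -- h2 : eps (p*(q+r)) • η (α x) (η y v) = eps (p*r) • η (α y) (η x v)
      have h3 := congrArg (fun t => eps 𝕂 (p * (q + r)) • t) h2
      simp only [smul_smul, eps_mul_self' 𝕂, one_smul] at h3
      rw [h3, eps_mul_eq' 𝕂 (hq4 p q r)]
    constructor
    · refine ext_internal' hgrV ?_
      intro r v hv
      simpa using key1 r v hv
    · refine ext_internal' hgrV ?_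
      intro r v hv
      simpa using key2 r v hv
end

section
/- Let (A, [·,·], α) be a Hom-Lie superalgebra, V a superspace, ρ : A → End(V) an even linear map and α_V : V → V an even linear map. Equip A ⊕ V (with grading (A ⊕ V)_k = A_k ⊕ V_k) with the bracket [x+u, y+v]_{A⊕V} = [x,y] + ρ(x)v − (−1)^{|y||u|} ρ(y)u and the map (α+α_V)(x+u) = α(x) + α_V(u), for homogeneous x, y ∈ A and u, v ∈ V. Then (V, ρ, α_V) is a representation of (A, [·,·], α) if and only if (A ⊕ V, [·,·]_{A⊕V}, α+α_V) is a Hom-Lie superalgebra. -/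
/-- `(V, ρ, α_V)` is a representation of a Hom-Lie superalgebra
`(A, [·,·], α)` iff the semidirect product `A ⊕ V` is a Hom-Lie superalgebra. -/
theorem statement7 {𝕂 : Type*} [Field 𝕂] [CharZero 𝕂]
    {A : Type*} [AddCommGroup A] [Module 𝕂 A]
    {V : Type*} [AddCommGroup V] [Module 𝕂 V]
    (gr : ZMod 2 → Submodule 𝕂 A) (grV : ZMod 2 → Submodule 𝕂 V)
    (hgr : DirectSum.IsInternal gr) (hgrV : DirectSum.IsInternal grV)
    (b : A → A → A) (α : A →ₗ[𝕂] A)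
    (hL : IsHomLieSuper 𝕂 gr b α)
    (ρ : A →ₗ[𝕂] Module.End 𝕂 V) (hρ : EvenEndMap 𝕂 gr grV ρ)
    (αV : V →ₗ[𝕂] V) (hαV : EvenLinMap 𝕂 grV αV)
    (bAV : A × V → A × V → A × V) (hbil : IsBilin 𝕂 bAV)
    (hdef : ∀ (p q : ZMod 2) (x y : A) (u v : V),
      x ∈ gr p → y ∈ gr q → u ∈ grV p → v ∈ grV q →
      bAV (x, u) (y, v) = (b x y, ρ x v - eps 𝕂 (q * p) • ρ y u)) :
    LieRep 𝕂 gr b α ρ αV ↔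
      IsHomLieSuper 𝕂 (fun k => (gr k).prod (grV k)) bAV (α.prodMap αV) := by
  have hb0r : ∀ t : A, b t 0 = 0 := fun t => by simpa using hL.bilin.smul_right 0 t t
  have hb0l : ∀ t : A, b 0 t = 0 := fun t => by simpa using hL.bilin.smul_left 0 t t
  constructor
  · -- forward direction
    intro hRep
    refine ⟨hbil, ?_, ?_, ?_, ?_⟩
    · -- even bracket
      rintro p q ⟨x, u⟩ ⟨y, v⟩ ⟨hx, hu⟩ ⟨hy, hv⟩
      rw [hdef p q x y u v hx hy hu hv]
      exact ⟨hL.even_bracket p q x y hx hy,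
        sub_mem (hρ p q x v hx hv)
          (Submodule.smul_mem _ _ (by simpa [add_comm] using hρ q p y u hy hu))⟩
    · -- even alpha
      rintro p ⟨x, u⟩ ⟨hx, hu⟩
      exact ⟨hL.even_alpha p x hx, hαV p u hu⟩
    · -- skew
      rintro p q ⟨x, u⟩ ⟨y, v⟩ ⟨hx, hu⟩ ⟨hy, hv⟩
      rw [hdef p q x y u v hx hy hu hv, hdef q p y x v u hy hx hv hu]
      simp only [Prod.smul_mk, Prod.neg_mk, Prod.mk.injEq, neg_smul]
      refine ⟨by simpa [neg_smul] using hL.skew p q x y hx hy, ?_⟩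
      fin_cases p <;> fin_cases q <;>
        simp (config := {decide := true}) [eps, show ((1 : ZMod 2) + 1) = 0 by decide, ZMod.val_one, ZMod.val_zero] <;>
        module
    · -- jacobi
      rintro p q r ⟨x, u⟩ ⟨y, v⟩ ⟨z, w⟩ ⟨hx, hu⟩ ⟨hy, hv⟩ ⟨hz, hw⟩
      have hax : α x ∈ gr p := hL.even_alpha p x hx
      have hay : α y ∈ gr q := hL.even_alpha q y hy
      have haz : α z ∈ gr r := hL.even_alpha r z hz
      have hau : αV u ∈ grV p := hαV p u hu
      have hav : αV v ∈ grV q := hαV q v hv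
      have haw : αV w ∈ grV r := hαV r w hw
      have m1 : ρ y w - eps 𝕂 (r * q) • ρ z v ∈ grV (q + r) :=
        sub_mem (hρ q r y w hy hw)
          (Submodule.smul_mem _ _ (by simpa [add_comm] using hρ r q z v hz hv))
      have m2 : ρ x v - eps 𝕂 (q * p) • ρ y u ∈ grV (p + q) :=
        sub_mem (hρ p q x v hx hv)
          (Submodule.smul_mem _ _ (by simpa [add_comm] using hρ q p y u hy hu))
      have m3 : ρ x w - eps 𝕂 (r * p) • ρ z u ∈ grV (p + r) :=
        sub_mem (hρ p r x w hx hw)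
          (Submodule.smul_mem _ _ (by simpa [add_comm] using hρ r p z u hz hu))
      simp only [LinearMap.prodMap_apply]
      rw [hdef q r y z v w hy hz hv hw, hdef p q x y u v hx hy hu hv,
        hdef p r x z u w hx hz hu hw,
        hdef p (q + r) (α x) (b y z) (αV u) _ hax (hL.even_bracket q r y z hy hz) hau m1,
        hdef (p + q) r (b x y) (α z) _ (αV w) (hL.even_bracket p q x y hx hy) haz m2 haw,
        hdef q (p + r) (α y) (b x z) (αV v) _ hay (hL.even_bracket p r x z hx hz) hav m3]
      simp only [Prod.smul_mk, Prod.mk_add_mk, Prod.mk.injEq]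
      refine ⟨hL.jacobi p q r x y z hx hy hz, ?_⟩
      have Hxy : ρ (b x y) (αV w)
          = ρ (α x) (ρ y w) - eps 𝕂 (p * q) • ρ (α y) (ρ x w) := by
        simpa using LinearMap.congr_fun (hRep p q x y hx hy) w
      have Hxz : ρ (b x z) (αV v)
          = ρ (α x) (ρ z v) - eps 𝕂 (p * r) • ρ (α z) (ρ x v) := by
        simpa using LinearMap.congr_fun (hRep p r x z hx hz) v
      have Hyz : ρ (b y z) (αV u)
          = ρ (α y) (ρ z u) - eps 𝕂 (q * r) • ρ (α z) (ρ y u) := by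
        simpa using LinearMap.congr_fun (hRep q r y z hy hz) u
      simp only [map_sub, map_smul]
      rw [Hxy, Hxz, Hyz]
      fin_cases p <;> fin_cases q <;> fin_cases r <;>
        simp (config := {decide := true}) [eps, show ((1 : ZMod 2) + 1) = 0 by decide, ZMod.val_one, ZMod.val_zero] <;>
        module
  · -- backward direction
    intro h p q x y hx hy
    have key : ∀ (r : ZMod 2) (w : V), w ∈ grV r →
        ρ (b x y) (αV w) = ρ (α x) (ρ y w) - eps 𝕂 (p * q) • ρ (α y) (ρ x w) := by
      intro r w hw
      have hax : α x ∈ gr p := hL.even_alpha p x hx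
      have hay : α y ∈ gr q := hL.even_alpha q y hy
      have haw : αV w ∈ grV r := hαV r w hw
      have hj := h.jacobi p q r (x, 0) (y, 0) (0, w)
        ⟨hx, (grV p).zero_mem⟩ ⟨hy, (grV q).zero_mem⟩ ⟨(gr r).zero_mem, hw⟩
      have e1 : bAV (y, 0) ((0 : A), w) = (0, ρ y w) := by
        rw [hdef q r y 0 0 w hy (gr r).zero_mem (grV q).zero_mem hw]
        simp [hb0r]
      have e2 : bAV (x, (0 : V)) (y, 0) = (b x y, 0) := by
        rw [hdef p q x y 0 0 hx hy (grV p).zero_mem (grV q).zero_mem]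
        simp
      have e3 : bAV (x, 0) ((0 : A), w) = (0, ρ x w) := by
        rw [hdef p r x 0 0 w hx (gr r).zero_mem (grV p).zero_mem hw]
        simp [hb0r]
      simp only [LinearMap.prodMap_apply, map_zero] at hj
      rw [e1, e2, e3] at hj
      rw [hdef p (q + r) (α x) 0 0 (ρ y w) hax (gr (q + r)).zero_mem (grV p).zero_mem
          (hρ q r y w hy hw),
        hdef (p + q) r (b x y) 0 0 (αV w) (hL.even_bracket p q x y hx hy)
          (gr r).zero_mem (grV (p + q)).zero_mem haw,
        hdef q (p + r) (α y) 0 0 (ρ x w) hay (gr (p + r)).zero_mem (grV q).zero_mem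
          (hρ p r x w hx hw)] at hj
      simp only [hb0r, map_zero, LinearMap.zero_apply, smul_zero, sub_zero,
        Prod.smul_mk, Prod.mk_add_mk, Prod.mk.injEq] at hj
      have := hj.2
      rw [this]
      abel
    have main : ∀ v : V,
        ρ (b x y) (αV v) = ρ (α x) (ρ y v) - eps 𝕂 (p * q) • ρ (α y) (ρ x v) := by
      intro v
      have hv : v ∈ ⨆ k, grV k := by
        rw [hgrV.submodule_iSup_eq_top]; trivial
      refine Submodule.iSup_induction (motive := fun v =>
        ρ (b x y) (αV v) = ρ (α x) (ρ y v) - eps 𝕂 (p * q) • ρ (α y) (ρ x v)) _ hv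
        (fun r w hw => key r w hw) (by simp) ?_
      intro a c ha hc
      simp only [map_add, ha, hc, smul_add]
      abel
    refine LinearMap.ext fun v => ?_
    simpa using main v
end

section
/- Let (A, [·,·], μ, α) be a Hom-Poisson superalgebra, V a superspace, ρ, η : A → End(V) even linear maps and α_V : V → V an even linear map. Equip A ⊕ V with the grading (A ⊕ V)_k = A_k ⊕ V_k, the map (α+α_V)(x+u) = α(x)+α_V(u), the product μ_{A⊕V}(x+u, y+v) = μ(x,y) + η(x)v + (−1)^{|y||u|} η(y)u, and the bracket [x+u, y+v]_{A⊕V} = [x,y] + ρ(x)v − (−1)^{|y||u|} ρ(y)u, for homogeneous x, y ∈ A, u, v ∈ V. Then (V, ρ, η, α_V) is a representation of the Hom-Poisson superalgebra (A, [·,·], μ, α) if and only if (A ⊕ V, [·,·]_{A⊕V}, μ_{A⊕V}, α+α_V) is a Hom-Poisson superalgebra. -/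
set_option maxHeartbeats 1600000


section AuxStatement8

private lemma ext_of_internal {𝕂 : Type*} [Field 𝕂] {V : Type*} [AddCommGroup V] [Module 𝕂 V]
    {grV : ZMod 2 → Submodule 𝕂 V} (hgrV : DirectSum.IsInternal grV)
    (f g : V →ₗ[𝕂] V) (h : ∀ (r : ZMod 2) (v : V), v ∈ grV r → f v = g v) : f = g := by
  ext v
  have hv : v ∈ ⨆ i, grV i := hgrV.submodule_iSup_eq_top ▸ Submodule.mem_top
  exact Submodule.iSup_induction (motive := fun v => f v = g v) grV hv h (by simp)
    (fun a c ha hc => show f (a + c) = g (a + c) by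
      rw [map_add, map_add, show f a = g a from ha, show f c = g c from hc])

end AuxStatement8

/-- `(V, ρ, η, α_V)` is a representation of a Hom-Poisson superalgebra

`(A, [·,·], μ, α)` iff the semidirect product `A ⊕ V` is a Hom-Poisson superalgebra. -/
theorem statement8 {𝕂 : Type*} [Field 𝕂] [CharZero 𝕂]
    {A : Type*} [AddCommGroup A] [Module 𝕂 A]
    {V : Type*} [AddCommGroup V] [Module 𝕂 V]
    (gr : ZMod 2 → Submodule 𝕂 A) (grV : ZMod 2 → Submodule 𝕂 V)
    (hgr : DirectSum.IsInternal gr) (hgrV : DirectSum.IsInternal grV)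
    (b μ : A → A → A) (α : A →ₗ[𝕂] A)
    (hP : IsHomPoissonSuper 𝕂 gr b μ α)
    (ρ η : A →ₗ[𝕂] Module.End 𝕂 V)
    (hρ : EvenEndMap 𝕂 gr grV ρ) (hη : EvenEndMap 𝕂 gr grV η)
    (αV : V →ₗ[𝕂] V) (hαV : EvenLinMap 𝕂 grV αV)
    (μAV bAV : A × V → A × V → A × V)
    (hbilμ : IsBilin 𝕂 μAV) (hbilb : IsBilin 𝕂 bAV)
    (hdefμ : ∀ (p q : ZMod 2) (x y : A) (u v : V),
      x ∈ gr p → y ∈ gr q → u ∈ grV p → v ∈ grV q →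
      μAV (x, u) (y, v) = (μ x y, η x v + eps 𝕂 (q * p) • η y u))
    (hdefb : ∀ (p q : ZMod 2) (x y : A) (u v : V),
      x ∈ gr p → y ∈ gr q → u ∈ grV p → v ∈ grV q →
      bAV (x, u) (y, v) = (b x y, ρ x v - eps 𝕂 (q * p) • ρ y u)) :
    PoissonRep 𝕂 gr b μ α ρ η αV ↔
      IsHomPoissonSuper 𝕂 (fun k => (gr k).prod (grV k)) bAV μAV (α.prodMap αV) := by
  constructor
  · -- Forward: representation gives semidirect Hom-Poisson superalgebra
    intro hrep
    have hαA := hP.lie.even_alpha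
    have heb := hP.lie.even_bracket
    have hem := hP.assoc.even_mul
    have mswapV : ∀ (a c : ZMod 2) (t : V), t ∈ grV (a + c) → t ∈ grV (c + a) :=
      fun a c t ht => by rwa [add_comm] at ht
    have alphaEven : EvenLinMap 𝕂 (fun k => (gr k).prod (grV k)) (α.prodMap αV) := by
      rintro s ⟨x, u⟩ hX
      rw [Submodule.mem_prod] at hX
      simpa only [Submodule.mem_prod, LinearMap.prodMap_apply] using
        ⟨hαA s x hX.1, hαV s u hX.2⟩
    refine { lie := { bilin := hbilb, even_bracket := ?_, even_alpha := alphaEven,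
                      skew := ?_, jacobi := ?_ },
             assoc := { bilin := hbilμ, even_mul := ?_, even_alpha := alphaEven,
                        assoc := ?_ },
             comm := ?_, leibniz := ?_ }
    · -- even bracket
      rintro p q ⟨x, u⟩ ⟨y, v⟩ hX hY
      rw [Submodule.mem_prod] at hX hY
      rw [hdefb p q x y u v hX.1 hY.1 hX.2 hY.2, Submodule.mem_prod]
      exact ⟨heb p q x y hX.1 hY.1,
        sub_mem (hρ p q x v hX.1 hY.2)
          (Submodule.smul_mem _ _ (mswapV q p _ (hρ q p y u hY.1 hX.2)))⟩
    · -- skew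
      rintro p q ⟨x, u⟩ ⟨y, v⟩ hX hY
      rw [Submodule.mem_prod] at hX hY
      rw [hdefb p q x y u v hX.1 hY.1 hX.2 hY.2, hdefb q p y x v u hY.1 hX.1 hY.2 hX.2]
      have hA := hP.lie.skew p q x y hX.1 hY.1
      simp only [Prod.smul_mk, Prod.mk.injEq, neg_smul, smul_sub, smul_smul, Prod.neg_mk]
      constructor
      · first
        | exact hA
        | linear_combination (norm := module) hA
      · fin_cases p <;> fin_cases q <;>
          norm_num (config := {decide := true}) [eps, ZMod.val_one, show ZMod.val (2:ZMod 2) = 0 by decide,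
            show ZMod.val (3:ZMod 2) = 1 by decide] <;>
          module
    · -- jacobi
      rintro p q r ⟨x, u⟩ ⟨y, v⟩ ⟨z, w⟩ hX hY hZ
      rw [Submodule.mem_prod] at hX hY hZ
      simp only [LinearMap.prodMap_apply]
      rw [hdefb q r y z v w hY.1 hZ.1 hY.2 hZ.2,
          hdefb p q x y u v hX.1 hY.1 hX.2 hY.2,
          hdefb p r x z u w hX.1 hZ.1 hX.2 hZ.2]
      rw [hdefb p (q+r) (α x) (b y z) (αV u) _ (hαA p x hX.1) (heb q r y z hY.1 hZ.1)
            (hαV p u hX.2)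
            (sub_mem (hρ q r y w hY.1 hZ.2)
              (Submodule.smul_mem _ _ (mswapV r q _ (hρ r q z v hZ.1 hY.2))))]
      rw [hdefb (p+q) r (b x y) (α z) _ (αV w) (heb p q x y hX.1 hY.1) (hαA r z hZ.1)
            (sub_mem (hρ p q x v hX.1 hY.2)
              (Submodule.smul_mem _ _ (mswapV q p _ (hρ q p y u hY.1 hX.2))))
            (hαV r w hZ.2)]
      rw [hdefb q (p+r) (α y) (b x z) (αV v) _ (hαA q y hY.1) (heb p r x z hX.1 hZ.1)
            (hαV q v hY.2)
            (sub_mem (hρ p r x w hX.1 hZ.2)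
              (Submodule.smul_mem _ _ (mswapV r p _ (hρ r p z u hZ.1 hX.2))))]
      have hyz := LinearMap.congr_fun (hrep.lie_rep q r y z hY.1 hZ.1) u
      have hxy := LinearMap.congr_fun (hrep.lie_rep p q x y hX.1 hY.1) w
      have hxz := LinearMap.congr_fun (hrep.lie_rep p r x z hX.1 hZ.1) v
      simp only [LinearMap.comp_apply, LinearMap.sub_apply, LinearMap.smul_apply]
        at hyz hxy hxz
      rw [hyz, hxy, hxz]
      simp only [map_sub, map_smul, smul_sub, smul_smul, Prod.mk_add_mk, Prod.smul_mk,
        Prod.mk.injEq]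
      constructor
      · first
        | exact hP.lie.jacobi p q r x y z hX.1 hY.1 hZ.1
        | linear_combination (norm := module) hP.lie.jacobi p q r x y z hX.1 hY.1 hZ.1
      · fin_cases p <;> fin_cases q <;> fin_cases r <;>
          norm_num (config := {decide := true}) [eps, ZMod.val_one, show ZMod.val (2:ZMod 2) = 0 by decide,
            show ZMod.val (3:ZMod 2) = 1 by decide] <;>
          module
    · -- even mul
      rintro p q ⟨x, u⟩ ⟨y, v⟩ hX hY
      rw [Submodule.mem_prod] at hX hY
      rw [hdefμ p q x y u v hX.1 hY.1 hX.2 hY.2, Submodule.mem_prod]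
      exact ⟨hem p q x y hX.1 hY.1,
        add_mem (hη p q x v hX.1 hY.2)
          (Submodule.smul_mem _ _ (mswapV q p _ (hη q p y u hY.1 hX.2)))⟩
    · -- assoc
      rintro p q r ⟨x, u⟩ ⟨y, v⟩ ⟨z, w⟩ hX hY hZ
      rw [Submodule.mem_prod] at hX hY hZ
      simp only [LinearMap.prodMap_apply]
      rw [hdefμ p q x y u v hX.1 hY.1 hX.2 hY.2,
          hdefμ q r y z v w hY.1 hZ.1 hY.2 hZ.2]
      rw [hdefμ (p+q) r (μ x y) (α z) _ (αV w) (hem p q x y hX.1 hY.1) (hαA r z hZ.1)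
            (add_mem (hη p q x v hX.1 hY.2)
              (Submodule.smul_mem _ _ (mswapV q p _ (hη q p y u hY.1 hX.2))))
            (hαV r w hZ.2)]
      rw [hdefμ p (q+r) (α x) (μ y z) (αV u) _ (hαA p x hX.1) (hem q r y z hY.1 hZ.1)
            (hαV p u hX.2)
            (add_mem (hη q r y w hY.1 hZ.2)
              (Submodule.smul_mem _ _ (mswapV r q _ (hη r q z v hZ.1 hY.2))))]
      have h1 := LinearMap.congr_fun (hrep.assoc_rep p q x y hX.1 hY.1).1 w
      have h2 := LinearMap.congr_fun (hrep.assoc_rep q r y z hY.1 hZ.1).1 u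
      have h3 := LinearMap.congr_fun (hrep.assoc_rep p r x z hX.1 hZ.1).2 v
      have h4 := LinearMap.congr_fun (hrep.assoc_rep q r y z hY.1 hZ.1).2 u
      simp only [LinearMap.comp_apply, LinearMap.smul_apply] at h1 h2 h3 h4
      rw [h1, h2]
      simp only [map_add, map_smul]
      rw [h3, h4]
      simp only [smul_add, smul_smul, Prod.mk.injEq]
      constructor
      · first
        | exact hP.assoc.assoc p q r x y z hX.1 hY.1 hZ.1
        | linear_combination (norm := module) hP.assoc.assoc p q r x y z hX.1 hY.1 hZ.1
      · fin_cases p <;> fin_cases q <;> fin_cases r <;>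
          norm_num (config := {decide := true}) [eps, ZMod.val_one, show ZMod.val (2:ZMod 2) = 0 by decide,
            show ZMod.val (3:ZMod 2) = 1 by decide] <;>
          module
    · -- supercommutativity
      rintro p q ⟨x, u⟩ ⟨y, v⟩ hX hY
      rw [Submodule.mem_prod] at hX hY
      rw [hdefμ p q x y u v hX.1 hY.1 hX.2 hY.2, hdefμ q p y x v u hY.1 hX.1 hY.2 hX.2]
      have hA := hP.comm p q x y hX.1 hY.1
      simp only [Prod.smul_mk, Prod.mk.injEq, smul_add, smul_smul]
      constructor
      · first
        | exact hA
        | linear_combination (norm := module) hA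
      · fin_cases p <;> fin_cases q <;>
          norm_num (config := {decide := true}) [eps, ZMod.val_one, show ZMod.val (2:ZMod 2) = 0 by decide,
            show ZMod.val (3:ZMod 2) = 1 by decide] <;>
          module
    · -- Leibniz
      rintro p q r ⟨x, u⟩ ⟨y, v⟩ ⟨z, w⟩ hX hY hZ
      rw [Submodule.mem_prod] at hX hY hZ
      simp only [LinearMap.prodMap_apply]
      rw [hdefμ q r y z v w hY.1 hZ.1 hY.2 hZ.2,
          hdefb p q x y u v hX.1 hY.1 hX.2 hY.2,
          hdefb p r x z u w hX.1 hZ.1 hX.2 hZ.2]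
      rw [hdefb p (q+r) (α x) (μ y z) (αV u) _ (hαA p x hX.1) (hem q r y z hY.1 hZ.1)
            (hαV p u hX.2)
            (add_mem (hη q r y w hY.1 hZ.2)
              (Submodule.smul_mem _ _ (mswapV r q _ (hη r q z v hZ.1 hY.2))))]
      rw [hdefμ (p+q) r (b x y) (α z) _ (αV w) (heb p q x y hX.1 hY.1) (hαA r z hZ.1)
            (sub_mem (hρ p q x v hX.1 hY.2)
              (Submodule.smul_mem _ _ (mswapV q p _ (hρ q p y u hY.1 hX.2))))
            (hαV r w hZ.2)]
      rw [hdefμ q (p+r) (α y) (b x z) (αV v) _ (hαA q y hY.1) (heb p r x z hX.1 hZ.1)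
            (hαV q v hY.2)
            (sub_mem (hρ p r x w hX.1 hZ.2)
              (Submodule.smul_mem _ _ (mswapV r p _ (hρ r p z u hZ.1 hX.2))))]
      have h1 := LinearMap.congr_fun (hrep.compat₂ q r y z hY.1 hZ.1) u
      have h2 := LinearMap.congr_fun (hrep.compat₁ p q x y hX.1 hY.1) w
      have h3 := LinearMap.congr_fun (hrep.compat₁ p r x z hX.1 hZ.1) v
      simp only [LinearMap.comp_apply, LinearMap.sub_apply, LinearMap.add_apply,
        LinearMap.smul_apply] at h1 h2 h3
      rw [h1, h2, h3]
      simp only [map_add, map_sub, map_smul, smul_add, smul_sub, smul_smul,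
        Prod.mk_add_mk, Prod.smul_mk, Prod.mk.injEq]
      constructor
      · first
        | exact hP.leibniz p q r x y z hX.1 hY.1 hZ.1
        | linear_combination (norm := module) hP.leibniz p q r x y z hX.1 hY.1 hZ.1
      · fin_cases p <;> fin_cases q <;> fin_cases r <;>
          norm_num (config := {decide := true}) [eps, ZMod.val_one, show ZMod.val (2:ZMod 2) = 0 by decide,
            show ZMod.val (3:ZMod 2) = 1 by decide] <;>
          module
  · -- Backward: semidirect Hom-Poisson superalgebra gives representation
    intro hSP
    have hαA := hP.lie.even_alpha
    have heb := hP.lie.even_bracket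
    have hem := hP.assoc.even_mul
    have mswapV : ∀ (a c : ZMod 2) (t : V), t ∈ grV (a + c) → t ∈ grV (c + a) :=
      fun a c t ht => by rwa [add_comm] at ht
    have memA : ∀ (s : ZMod 2) (a : A), a ∈ gr s →
        ((a, (0:V)) ∈ (gr s).prod (grV s)) :=
      fun s a ha => Submodule.mem_prod.mpr ⟨ha, zero_mem _⟩
    have memV : ∀ (s : ZMod 2) (t : V), t ∈ grV s →
        (((0:A), t) ∈ (gr s).prod (grV s)) :=
      fun s t ht => Submodule.mem_prod.mpr ⟨zero_mem _, ht⟩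
    refine { assoc_rep := ?_, lie_rep := ?_, compat₁ := ?_, compat₂ := ?_ }
    · -- assoc_rep
      intro p q x y hx hy
      constructor
      · refine ext_of_internal hgrV _ _ ?_
        intro r v hv
        have h := hSP.assoc.assoc p q r (x, 0) (y, 0) (0, v)
          (memA p x hx) (memA q y hy) (memV r v hv)
        simp only [LinearMap.prodMap_apply, map_zero] at h
        rw [hdefμ p q x y 0 0 hx hy (zero_mem _) (zero_mem _),
            hdefμ q r y 0 0 v hy (zero_mem _) (zero_mem _) hv] at h
        simp only [map_zero, LinearMap.zero_apply, smul_zero, add_zero, zero_add,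
          sub_zero, zero_sub] at h
        rw [hdefμ (p+q) r (μ x y) 0 0 (αV v) (hem p q x y hx hy) (zero_mem _)
              (zero_mem _) (hαV r v hv),
            hdefμ p (q+r) (α x) (μ y 0) 0 (η y v) (hαA p x hx)
              (hem q r y 0 hy (zero_mem _)) (zero_mem _) (hη q r y v hy hv)] at h
        simp only [map_zero, LinearMap.zero_apply, smul_zero, add_zero, zero_add,
          Prod.mk.injEq] at h
        simp only [LinearMap.comp_apply]
        exact h.2
      · refine ext_of_internal hgrV _ _ ?_
        intro r v hv
        have h := hSP.assoc.assoc q r p (y, 0) (0, v) (x, 0)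
          (memA q y hy) (memV r v hv) (memA p x hx)
        simp only [LinearMap.prodMap_apply, map_zero] at h
        rw [hdefμ q r y 0 0 v hy (zero_mem _) (zero_mem _) hv,
            hdefμ r p 0 x v 0 (zero_mem _) hx hv (zero_mem _)] at h
        simp only [map_zero, LinearMap.zero_apply, smul_zero, add_zero, zero_add,
          sub_zero, zero_sub] at h
        rw [hdefμ (q+r) p (μ y 0) (α x) (η y v) 0 (hem q r y 0 hy (zero_mem _))
              (hαA p x hx) (hη q r y v hy hv) (zero_mem _),
            hdefμ q (r+p) (α y) (μ 0 x) 0 (eps 𝕂 (p*r) • η x v) (hαA q y hy)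
              (hem r p 0 x (zero_mem _) hx) (zero_mem _)
              (Submodule.smul_mem _ _ (mswapV p r _ (hη p r x v hx hv)))] at h
        simp only [map_zero, map_smul, LinearMap.zero_apply, smul_zero, add_zero,
          zero_add, Prod.mk.injEq] at h
        simp only [LinearMap.comp_apply, LinearMap.smul_apply]
        have h2 := h.2
        fin_cases p <;> fin_cases q <;> fin_cases r <;>
          norm_num (config := {decide := true}) [eps, ZMod.val_one, show ZMod.val (2:ZMod 2) = 0 by decide,
            show ZMod.val (3:ZMod 2) = 1 by decide] at h2 ⊢ <;>
          first
          | exact h2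
          | exact h2.symm
          | linear_combination (norm := module) h2
          | linear_combination (norm := module) -h2
    · -- lie_rep
      intro p q x y hx hy
      refine ext_of_internal hgrV _ _ ?_
      intro r v hv
      have h := hSP.lie.jacobi p q r (x, 0) (y, 0) (0, v)
        (memA p x hx) (memA q y hy) (memV r v hv)
      simp only [LinearMap.prodMap_apply, map_zero] at h
      rw [hdefb q r y 0 0 v hy (zero_mem _) (zero_mem _) hv,
          hdefb p q x y 0 0 hx hy (zero_mem _) (zero_mem _),
          hdefb p r x 0 0 v hx (zero_mem _) (zero_mem _) hv] at h
      simp only [map_zero, LinearMap.zero_apply, smul_zero, add_zero, zero_add,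
        sub_zero, zero_sub] at h
      rw [hdefb p (q+r) (α x) (b y 0) 0 (ρ y v) (hαA p x hx)
            (heb q r y 0 hy (zero_mem _)) (zero_mem _) (hρ q r y v hy hv),
          hdefb (p+q) r (b x y) 0 0 (αV v) (heb p q x y hx hy) (zero_mem _)
            (zero_mem _) (hαV r v hv),
          hdefb q (p+r) (α y) (b x 0) 0 (ρ x v) (hαA q y hy)
            (heb p r x 0 hx (zero_mem _)) (zero_mem _) (hρ p r x v hx hv)] at h
      simp only [map_zero, LinearMap.zero_apply, smul_zero, add_zero, zero_add,
        sub_zero, zero_sub, Prod.mk_add_mk, Prod.smul_mk, Prod.mk.injEq, smul_neg] at h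
      simp only [LinearMap.comp_apply, LinearMap.sub_apply, LinearMap.smul_apply]
      have h2 := h.2
      fin_cases p <;> fin_cases q <;> fin_cases r <;>
        norm_num (config := {decide := true}) [eps, ZMod.val_one, show ZMod.val (2:ZMod 2) = 0 by decide,
          show ZMod.val (3:ZMod 2) = 1 by decide] at h2 ⊢ <;>
        first
        | exact h2
        | exact h2.symm
        | linear_combination (norm := module) h2
        | linear_combination (norm := module) -h2
    · -- compat₁
      intro p q x y hx hy
      refine ext_of_internal hgrV _ _ ?_
      intro r v hv
      have h := hSP.leibniz p q r (x, 0) (y, 0) (0, v)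
        (memA p x hx) (memA q y hy) (memV r v hv)
      simp only [LinearMap.prodMap_apply, map_zero] at h
      rw [hdefμ q r y 0 0 v hy (zero_mem _) (zero_mem _) hv,
          hdefb p q x y 0 0 hx hy (zero_mem _) (zero_mem _),
          hdefb p r x 0 0 v hx (zero_mem _) (zero_mem _) hv] at h
      simp only [map_zero, LinearMap.zero_apply, smul_zero, add_zero, zero_add,
        sub_zero, zero_sub] at h
      rw [hdefb p (q+r) (α x) (μ y 0) 0 (η y v) (hαA p x hx)
            (hem q r y 0 hy (zero_mem _)) (zero_mem _) (hη q r y v hy hv),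
          hdefμ (p+q) r (b x y) 0 0 (αV v) (heb p q x y hx hy) (zero_mem _)
            (zero_mem _) (hαV r v hv),
          hdefμ q (p+r) (α y) (b x 0) 0 (ρ x v) (hαA q y hy)
            (heb p r x 0 hx (zero_mem _)) (zero_mem _) (hρ p r x v hx hv)] at h
      simp only [map_zero, LinearMap.zero_apply, smul_zero, add_zero, zero_add,
        sub_zero, zero_sub, Prod.mk_add_mk, Prod.smul_mk, Prod.mk.injEq, smul_neg] at h
      simp only [LinearMap.comp_apply, LinearMap.sub_apply, LinearMap.smul_apply]
      have h2 := h.2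
      fin_cases p <;> fin_cases q <;> fin_cases r <;>
        norm_num (config := {decide := true}) [eps, ZMod.val_one, show ZMod.val (2:ZMod 2) = 0 by decide,
          show ZMod.val (3:ZMod 2) = 1 by decide] at h2 ⊢ <;>
        first
        | exact h2
        | exact h2.symm
        | linear_combination (norm := module) h2
        | linear_combination (norm := module) -h2
    · -- compat₂
      intro p q x y hx hy
      refine ext_of_internal hgrV _ _ ?_
      intro r v hv
      have h := hSP.leibniz r p q (0, v) (x, 0) (y, 0)
        (memV r v hv) (memA p x hx) (memA q y hy)
      simp only [LinearMap.prodMap_apply, map_zero] at h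
      rw [hdefμ p q x y 0 0 hx hy (zero_mem _) (zero_mem _),
          hdefb r p 0 x v 0 (zero_mem _) hx hv (zero_mem _),
          hdefb r q 0 y v 0 (zero_mem _) hy hv (zero_mem _)] at h
      simp only [map_zero, LinearMap.zero_apply, smul_zero, add_zero, zero_add,
        sub_zero, zero_sub] at h
      rw [hdefb r (p+q) 0 (μ x y) (αV v) 0 (zero_mem _) (hem p q x y hx hy)
            (hαV r v hv) (zero_mem _),
          hdefμ (r+p) q (b 0 x) (α y) (-(eps 𝕂 (p*r) • ρ x v)) 0
            (heb r p 0 x (zero_mem _) hx) (hαA q y hy)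
            (neg_mem (Submodule.smul_mem _ _ (mswapV p r _ (hρ p r x v hx hv))))
            (zero_mem _),
          hdefμ p (r+q) (α x) (b 0 y) 0 (-(eps 𝕂 (q*r) • ρ y v)) (hαA p x hx)
            (heb r q 0 y (zero_mem _) hy) (zero_mem _)
            (neg_mem (Submodule.smul_mem _ _ (mswapV q r _ (hρ q r y v hy hv))))] at h
      simp only [map_zero, map_neg, map_smul, LinearMap.zero_apply, smul_zero,
        add_zero, zero_add, sub_zero, zero_sub, smul_neg, smul_smul,
        Prod.mk_add_mk, Prod.smul_mk, Prod.mk.injEq] at h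
      simp only [LinearMap.comp_apply, LinearMap.add_apply, LinearMap.smul_apply]
      have h2 := h.2
      fin_cases p <;> fin_cases q <;> fin_cases r <;>
        norm_num (config := {decide := true}) [eps, ZMod.val_one, show ZMod.val (2:ZMod 2) = 0 by decide,
          show ZMod.val (3:ZMod 2) = 1 by decide] at h2 ⊢ <;>
        first
        | exact h2
        | exact h2.symm
        | linear_combination (norm := module) h2
        | linear_combination (norm := module) -h2
end
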